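/- Let B: I^op → BrMonCat be a diagram of braided monoidal categories. The nerve of the diagram, Ner_I B: [n] ↦ ∐_{G:[n]→I} Z³([n], B∘G), where Z³([n], B∘G) is the set of 3-cocycles of [n] with coefficients in the composite [n] → I → BrMonCat, is a well-defined simplicial set. -/

import Mathlib

open CategoryTheory Opposite MonoidalCategory

variable {I : Type} [SmallCategory I]

lemma tfun_comp_obj (M : Iᵒᵖ ⥤ Cat.{0, 0}) {n : ℕ} (G : Fin (n + 1) ⥤ Iᵒᵖ)
    {i j k : Fin (n + 1)} (hij : i ≤ j) (hjk : j ≤ k) (X : M.obj (G.obj i)) :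
    (M.map (G.map (homOfLE hjk))).toFunctor.obj ((M.map (G.map (homOfLE hij))).toFunctor.obj X) =
      (M.map (G.map (homOfLE (hij.trans hjk)))).toFunctor.obj X := by
  rw [← homOfLE_comp hij hjk, G.map_comp, M.map_comp]
  rfl

lemma tfun_refl_obj (M : Iᵒᵖ ⥤ Cat.{0, 0}) {n : ℕ} (G : Fin (n + 1) ⥤ Iᵒᵖ)
    (i : Fin (n + 1)) (X : M.obj (G.obj i)) :
    (M.map (G.map (homOfLE (le_refl i)))).toFunctor.obj X = X := by
  have h : homOfLE (le_refl i) = 𝟙 i := rfl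
  rw [h, G.map_id, M.map_id]
  rfl

/-- `G : [n] → I` is encoded as a functor `Fin (n+1) ⥤ Iᵒᵖ`; the fields `Y` and `f` are the
paper's objects `G_{i,j,k}` and morphisms `G_{i,j,k,ℓ}`. -/
structure ThreeCocycleD (M : Iᵒᵖ ⥤ Cat.{0, 0})
    [∀ x, MonoidalCategory (M.obj x)] [∀ x, BraidedCategory (M.obj x)]
    [∀ (x y : Iᵒᵖ) (f : x ⟶ y), (M.map f).toFunctor.Braided]
    {n : ℕ} (G : Fin (n + 1) ⥤ Iᵒᵖ) where
  Y : ∀ {i j k : Fin (n + 1)}, i ≤ j → j ≤ k → M.obj (G.obj k)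
  f : ∀ {i j k l : Fin (n + 1)} (hij : i ≤ j) (hjk : j ≤ k) (hkl : k ≤ l),
    ((M.map (G.map (homOfLE hkl))).toFunctor.obj (Y hij hjk) ⊗ Y (hij.trans hjk) hkl) ⟶
      (Y hjk hkl ⊗ Y hij (hjk.trans hkl))
  Y_unit_left : ∀ {i j : Fin (n + 1)} (hij : i ≤ j),
    Y (le_refl i) hij = 𝟙_ (M.obj (G.obj j))
  Y_unit_right : ∀ {i j : Fin (n + 1)} (hij : i ≤ j),
    Y hij (le_refl j) = 𝟙_ (M.obj (G.obj j))
  norm_right : ∀ {i j k : Fin (n + 1)} (hij : i ≤ j) (hjk : j ≤ k),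
    f hij hjk (le_refl k) =
      eqToHom (show
          ((M.map (G.map (homOfLE (le_refl k)))).toFunctor.obj (Y hij hjk) ⊗
            Y (hij.trans hjk) (le_refl k)) = (Y hij hjk ⊗ 𝟙_ (M.obj (G.obj k))) by
        rw [tfun_refl_obj, Y_unit_right]) ≫
      (β_ (Y hij hjk) (𝟙_ (M.obj (G.obj k)))).hom ≫
      eqToHom (show (𝟙_ (M.obj (G.obj k)) ⊗ Y hij hjk) =
          (Y hjk (le_refl k) ⊗ Y hij (hjk.trans (le_refl k))) by
        rw [Y_unit_right]) 
  norm_mid : ∀ {i j k : Fin (n + 1)} (hij : i ≤ j) (hjk : j ≤ k),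
    f hij (le_refl j) hjk =
      ((eqToHom (congrArg (M.map (G.map (homOfLE hjk))).toFunctor.obj (Y_unit_right hij)) ≫
        Functor.OplaxMonoidal.η (M.map (G.map (homOfLE hjk))).toFunctor ≫
        eqToHom (Y_unit_left hjk).symm) ▷ Y hij hjk)
  norm_left : ∀ {i j k : Fin (n + 1)} (hij : i ≤ j) (hjk : j ≤ k),
    f (le_refl i) hij hjk =
      ((eqToHom (congrArg (M.map (G.map (homOfLE hjk))).toFunctor.obj (Y_unit_left hij)) ≫
        Functor.OplaxMonoidal.η (M.map (G.map (homOfLE hjk))).toFunctor) ▷ Y hij hjk) ≫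
      (β_ (𝟙_ (M.obj (G.obj k))) (Y hij hjk)).hom ≫
      (Y hij hjk ◁ eqToHom (Y_unit_left (hij.trans hjk)).symm)
  coh : ∀ {i j k l r : Fin (n + 1)} (hij : i ≤ j) (hjk : j ≤ k) (hkl : k ≤ l)
      (hlr : l ≤ r),
    ((M.map (G.map (homOfLE hlr))).toFunctor.map (f hij hjk hkl) ▷ Y ((hij.trans hjk).trans hkl) hlr) ≫
      (Functor.OplaxMonoidal.δ (M.map (G.map (homOfLE hlr))).toFunctor
        (Y hjk hkl) (Y hij (hjk.trans hkl)) ▷ Y ((hij.trans hjk).trans hkl) hlr) ≫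
      (α_ _ _ _).hom ≫
      ((M.map (G.map (homOfLE hlr))).toFunctor.obj (Y hjk hkl) ◁ f hij (hjk.trans hkl) hlr) ≫
      (α_ _ _ _).inv ≫
      (f hjk hkl hlr ▷ Y hij ((hjk.trans hkl).trans hlr)) =
    (Functor.OplaxMonoidal.δ (M.map (G.map (homOfLE hlr))).toFunctor
        ((M.map (G.map (homOfLE hkl))).toFunctor.obj (Y hij hjk)) (Y (hij.trans hjk) hkl) ▷
          Y ((hij.trans hjk).trans hkl) hlr) ≫
      (α_ _ _ _).hom ≫
      ((M.map (G.map (homOfLE hlr))).toFunctor.obj ((M.map (G.map (homOfLE hkl))).toFunctor.obj (Y hij hjk)) ◁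
        f (hij.trans hjk) hkl hlr) ≫
      (α_ _ _ _).inv ≫
      ((β_ ((M.map (G.map (homOfLE hlr))).toFunctor.obj ((M.map (G.map (homOfLE hkl))).toFunctor.obj
          (Y hij hjk))) (Y hkl hlr)).hom ▷ Y (hij.trans hjk) (hkl.trans hlr)) ≫
      (α_ _ _ _).hom ≫
      (Y hkl hlr ◁
        ((eqToHom (tfun_comp_obj M G hkl hlr (Y hij hjk)) ▷
            Y (hij.trans hjk) (hkl.trans hlr)) ≫
          f hij hjk (hkl.trans hlr))) ≫
      (α_ _ _ _).inv

namespace ThreeCocycleD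

variable {M : Iᵒᵖ ⥤ Cat.{0, 0}} [∀ x, MonoidalCategory (M.obj x)]
  [∀ x, BraidedCategory (M.obj x)] [∀ (x y : Iᵒᵖ) (f : x ⟶ y), (M.map f).toFunctor.Braided]

def pull {m n : ℕ} (α : Fin (m + 1) →o Fin (n + 1)) {G : Fin (n + 1) ⥤ Iᵒᵖ}
    (c : ThreeCocycleD M G) : ThreeCocycleD M (α.monotone.functor ⋙ G) where
  Y hij hjk := c.Y (α.monotone hij) (α.monotone hjk)
  f hij hjk hkl := c.f (α.monotone hij) (α.monotone hjk) (α.monotone hkl)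
  Y_unit_left _ := c.Y_unit_left _
  Y_unit_right _ := c.Y_unit_right _
  norm_right _ _ := c.norm_right _ _
  norm_mid _ _ := c.norm_mid _ _
  norm_left _ _ := c.norm_left _ _
  coh _ _ _ _ := c.coh _ _ _ _

variable (M) in
/-- Simplicial operators reindex both `G` and the cocycle data by precomposition, which is
strictly functorial, so the simplicial identities hold definitionally. -/
def nerve : SSet.{0} where
  obj X := Σ G : Fin (X.unop.len + 1) ⥤ Iᵒᵖ, ThreeCocycleD M G
  map f := TypeCat.ofHom fun x =>
    ⟨f.unop.toOrderHom.monotone.functor ⋙ x.1, x.2.pull f.unop.toOrderHom⟩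
  map_id _ := rfl
  map_comp _ _ := rfl

end ThreeCocycleD

/-- The nerve of a diagram of braided monoidal categories,
`[n] ↦ ∐_{G : [n] → I} Z³([n], B ∘ G)` (3-cocycles with coefficients in the composite
diagram), is a well-defined simplicial set, with the simplicial operators acting by
precomposition on `G` and by pullback on the 3-cocycle. -/
theorem nerve_of_diagram_of_braided_monoidal_categories
    (I : Type) [SmallCategory I] (M : Iᵒᵖ ⥤ Cat.{0, 0})
    [∀ x, MonoidalCategory (M.obj x)] [∀ x, BraidedCategory (M.obj x)]
    [∀ (x y : Iᵒᵖ) (f : x ⟶ y), (M.map f).toFunctor.Braided] :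
    ∃ (N : SSet.{0})
      (e : ∀ n : ℕ, N.obj (op (SimplexCategory.mk n)) ≃
        Σ G : Fin (n + 1) ⥤ Iᵒᵖ, ThreeCocycleD M G),
      ∀ (m n : ℕ) (α : SimplexCategory.mk m ⟶ SimplexCategory.mk n)
        (x : N.obj (op (SimplexCategory.mk n))),
        ((e m) (N.map α.op x)).1 = α.toOrderHom.monotone.functor ⋙ ((e n) x).1 ∧
        HEq ((e m) (N.map α.op x)).2 (((e n) x).2.pull α.toOrderHom) :=
  ⟨ThreeCocycleD.nerve M, fun _ => Equiv.refl _, fun _ _ _ _ => ⟨rfl, HEq.rfl⟩⟩
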